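/- Let (S_N)_{N∈ℕ} be a sequence of nonempty finite subsets of T such that the one-sided Hausdorff distance d_H(T, S_N) = sup_{t∈T} inf_{s∈S_N} ‖t − s‖₂ tends to 0 as N → ∞. Then for every ρ > 0 there exists N ∈ ℕ such that λ_{S_N} ≥ ε* − ρ. (Claim 2 of Theorem 1: the data-based estimate converges to the optimal error bound from below.) -/

import Mathlib

open Matrix Set Filter

/-- Worst-case error bound `ε̄_R(θ) = max(0, sup_{(φ,y)∈R} |y − θᵀφ| − d̄)`. -/
noncomputable def ebar {m : ℕ} (dbar : ℝ) (R : Set ((Fin m → ℝ) × ℝ)) (θ : Fin m → ℝ) : ℝ :=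
  max 0 (sSup ((fun q => |q.2 - θ ⬝ᵥ q.1| - dbar) '' R))

/-- Euclidean distance between regressor–output pairs, i.e. the 2-norm on ℝ^{m+1}. -/
noncomputable def pairDist {m : ℕ} (t s : (Fin m → ℝ) × ℝ) : ℝ :=
  Real.sqrt (∑ i, (t.1 i - s.1 i) ^ 2 + (t.2 - s.2) ^ 2)

/-!
Every `t ∈ T` lies within `δ_N = d_H(T, S_N)` of some `s ∈ S_N`, and for fixed `θ` the residual
`(φ, y) ↦ |y − θᵀφ|` is Lipschitz with constant `1 + ‖θ‖₂` (Cauchy–Schwarz). Hence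
`ε̄_T(θ) ≤ ε̄_{S_N}(θ) + (1 + ‖θ‖₂) δ_N`, and since `‖θ‖₂` is bounded on the compact set `Ω`,
taking infima over `Ω` gives `ε* ≤ λ_{S_N} + ρ` as soon as `δ_N` is small enough.
-/

lemma abs_dotProduct_le_sqrt_mul_sqrt {n : Type*} [Fintype n] (x y : n → ℝ) :
    |x ⬝ᵥ y| ≤ √(∑ i, x i ^ 2) * √(∑ i, y i ^ 2) := by
  have hneg := Real.sum_mul_le_sqrt_mul_sqrt Finset.univ (-x) y
  simp only [Pi.neg_apply, neg_sq, neg_mul, Finset.sum_neg_distrib] at hneg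
  exact abs_le.2 ⟨by rw [dotProduct]; linarith, Real.sum_mul_le_sqrt_mul_sqrt _ x y⟩

section PairDist

variable {m : ℕ}

lemma pairDist_nonneg (t s : (Fin m → ℝ) × ℝ) : 0 ≤ pairDist t s :=
  Real.sqrt_nonneg _

lemma continuous_pairDist_left (s : (Fin m → ℝ) × ℝ) : Continuous fun t => pairDist t s := by
  unfold pairDist
  fun_prop

lemma abs_snd_sub_le_pairDist (t s : (Fin m → ℝ) × ℝ) : |t.2 - s.2| ≤ pairDist t s := by
  rw [← Real.sqrt_sq_eq_abs]
  exact Real.sqrt_le_sqrt (le_add_of_nonneg_left (Finset.sum_nonneg fun i _ => sq_nonneg _))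

lemma sqrt_sum_sq_fst_sub_le_pairDist (t s : (Fin m → ℝ) × ℝ) :
    √(∑ i, (t.1 - s.1) i ^ 2) ≤ pairDist t s :=
  Real.sqrt_le_sqrt (le_add_of_nonneg_right (sq_nonneg _))

lemma abs_residual_le_add_mul_pairDist (θ : Fin m → ℝ) (t s : (Fin m → ℝ) × ℝ) :
    |t.2 - θ ⬝ᵥ t.1| ≤ |s.2 - θ ⬝ᵥ s.1| + (1 + √(∑ i, θ i ^ 2)) * pairDist t s := by
  have hφ : |θ ⬝ᵥ (t.1 - s.1)| ≤ √(∑ i, θ i ^ 2) * pairDist t s :=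
    (abs_dotProduct_le_sqrt_mul_sqrt θ _).trans
      (mul_le_mul_of_nonneg_left (sqrt_sum_sq_fst_sub_le_pairDist t s) (Real.sqrt_nonneg _))
  have hy := abs_snd_sub_le_pairDist t s
  calc |t.2 - θ ⬝ᵥ t.1| = |(s.2 - θ ⬝ᵥ s.1) + ((t.2 - s.2) - θ ⬝ᵥ (t.1 - s.1))| := by
        rw [dotProduct_sub]; ring_nf
    _ ≤ |s.2 - θ ⬝ᵥ s.1| + (|t.2 - s.2| + |θ ⬝ᵥ (t.1 - s.1)|) :=
        (abs_add_le _ _).trans (add_le_add_right (abs_sub _ _) _)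
    _ ≤ _ := by linarith

end PairDist

section Ebar

variable {m : ℕ} {dbar : ℝ} {R : Set ((Fin m → ℝ) × ℝ)} {θ : Fin m → ℝ}

lemma ebar_nonneg : 0 ≤ ebar dbar R θ :=
  le_max_left _ _

lemma le_ebar_of_finite (hR : R.Finite) {q : (Fin m → ℝ) × ℝ} (hq : q ∈ R) :
    |q.2 - θ ⬝ᵥ q.1| - dbar ≤ ebar dbar R θ :=
  (le_csSup (hR.image fun q => |q.2 - θ ⬝ᵥ q.1| - dbar).bddAbove ⟨q, hq, rfl⟩).trans
    (le_max_right _ _)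

lemma ebar_le {c : ℝ} (hc : 0 ≤ c) (h : ∀ q ∈ R, |q.2 - θ ⬝ᵥ q.1| - dbar ≤ c) :
    ebar dbar R θ ≤ c :=
  max_le hc (Real.sSup_le (by rintro _ ⟨q, hq, rfl⟩; exact h q hq) hc)

lemma ebar_le_ebar_add_of_forall_exists_pairDist_le {T S : Set ((Fin m → ℝ) × ℝ)}
    (hS : S.Finite) {δ : ℝ} (hδ : 0 ≤ δ) (hTS : ∀ t ∈ T, ∃ s ∈ S, pairDist t s ≤ δ) :
    ebar dbar T θ ≤ ebar dbar S θ + (1 + √(∑ i, θ i ^ 2)) * δ := by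
  have hθ : 0 ≤ 1 + √(∑ i, θ i ^ 2) := by positivity
  refine ebar_le (add_nonneg ebar_nonneg (mul_nonneg hθ hδ)) fun t ht => ?_
  obtain ⟨s, hs, hts⟩ := hTS t ht
  have hres := abs_residual_le_add_mul_pairDist θ t s
  have hs_le := le_ebar_of_finite (dbar := dbar) (θ := θ) hS hs
  linarith [mul_le_mul_of_nonneg_left hts hθ]

end Ebar

section Hausdorff

variable {α β : Type*} {f : α → β → ℝ} {T : Set α} {S : Set β}

lemma bddAbove_image_sInf_image_of_isCompact [TopologicalSpace α] (hT : IsCompact T)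
    (hS : S.Finite) (hSne : S.Nonempty) (hf : ∀ s, Continuous (f · s)) :
    BddAbove ((fun t => sInf (f t '' S)) '' T) := by
  obtain ⟨s₀, hs₀⟩ := hSne
  obtain ⟨K, hK⟩ := hT.bddAbove_image (hf s₀).continuousOn
  refine ⟨K, ?_⟩
  rintro _ ⟨t, ht, rfl⟩
  exact (csInf_le (hS.image _).bddBelow ⟨s₀, hs₀, rfl⟩).trans (hK ⟨t, ht, rfl⟩)

lemma exists_le_sSup_image_sInf_image (hS : S.Finite) (hSne : S.Nonempty)
    (hbdd : BddAbove ((fun t => sInf (f t '' S)) '' T)) {t : α} (ht : t ∈ T) :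
    ∃ s ∈ S, f t s ≤ sSup ((fun t => sInf (f t '' S)) '' T) := by
  obtain ⟨s, hs, hst⟩ := (hSne.image (f t)).csInf_mem (hS.image _)
  exact ⟨s, hs, hst ▸ le_csSup hbdd ⟨t, ht, rfl⟩⟩

end Hausdorff

lemma sInf_image_le_sInf_image_add {α : Type*} {f g : α → ℝ} {s : Set α} {c : ℝ}
    (hs : s.Nonempty) (hf : BddBelow (f '' s)) (h : ∀ x ∈ s, f x ≤ g x + c) :
    sInf (f '' s) ≤ sInf (g '' s) + c := by
  rw [← sub_le_iff_le_add]
  refine le_csInf (hs.image g) ?_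
  rintro _ ⟨x, hx, rfl⟩
  exact sub_le_iff_le_add.2 ((csInf_le hf ⟨x, hx, rfl⟩).trans (h x hx))

theorem stmt2_general {m : ℕ} (T : Set ((Fin m → ℝ) × ℝ)) (Ω : Set (Fin m → ℝ))
    (hTc : IsCompact T) (hΩne : Ω.Nonempty) (hΩc : IsCompact Ω)
    (dbar : ℝ)
    (S : ℕ → Set ((Fin m → ℝ) × ℝ))
    (hSne : ∀ N, (S N).Nonempty) (hSfin : ∀ N, (S N).Finite)
    (hHaus : Tendsto (fun N => sSup ((fun t => sInf ((fun s => pairDist t s) '' S N)) '' T))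
      atTop (nhds 0)) :
    ∀ ρ > 0, ∃ N : ℕ,
      sInf ((ebar dbar (S N)) '' Ω) ≥ sInf ((ebar dbar T) '' Ω) - ρ := by
  intro ρ hρ
  obtain ⟨K, hK⟩ := hΩc.bddAbove_image
    (f := fun θ : Fin m → ℝ => √(∑ i, θ i ^ 2)) (by fun_prop)
  obtain ⟨N, hN⟩ := ((hHaus.const_mul (1 + K)).eventually
    (gt_mem_nhds (by rwa [mul_zero]))).exists
  set δ := sSup ((fun t => sInf ((fun s => pairDist t s) '' S N)) '' T)
  have hδ : 0 ≤ δ := Real.sSup_nonneg <| by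
    rintro _ ⟨t, -, rfl⟩
    exact Real.sInf_nonneg (by rintro _ ⟨s, -, rfl⟩; exact pairDist_nonneg t s)
  have hclose : ∀ t ∈ T, ∃ s ∈ S N, pairDist t s ≤ δ := fun t ht =>
    exists_le_sSup_image_sInf_image (hSfin N) (hSne N)
      (bddAbove_image_sInf_image_of_isCompact hTc (hSfin N) (hSne N) continuous_pairDist_left) ht
  refine ⟨N, sub_le_iff_le_add.2 <| sInf_image_le_sInf_image_add hΩne
    ⟨0, by rintro _ ⟨θ, -, rfl⟩; exact ebar_nonneg⟩ fun θ hθ => ?_⟩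
  calc ebar dbar T θ ≤ ebar dbar (S N) θ + (1 + √(∑ i, θ i ^ 2)) * δ :=
        ebar_le_ebar_add_of_forall_exists_pairDist_le (hSfin N) hδ hclose
    _ ≤ ebar dbar (S N) θ + ρ := by
        have hθK : √(∑ i, θ i ^ 2) ≤ K := hK ⟨θ, hθ, rfl⟩
        have : (1 + √(∑ i, θ i ^ 2)) * δ ≤ (1 + K) * δ := by gcongr
        linarith

/-- Claim 2 of Theorem 1: if the one-sided Hausdorff distance `d_H(T, S_N)` tends to `0`,
then for every `ρ > 0` there exists `N` with `λ_{S_N} ≥ ε* − ρ`. -/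
theorem stmt2 {m : ℕ} (hm : 1 ≤ m) (T : Set ((Fin m → ℝ) × ℝ)) (Ω : Set (Fin m → ℝ))
    (hTne : T.Nonempty) (hTc : IsCompact T) (hΩne : Ω.Nonempty) (hΩc : IsCompact Ω)
    (dbar : ℝ) (hd : 0 ≤ dbar)
    (S : ℕ → Set ((Fin m → ℝ) × ℝ))
    (hSne : ∀ N, (S N).Nonempty) (hSfin : ∀ N, (S N).Finite) (hST : ∀ N, S N ⊆ T)
    (hHaus : Tendsto (fun N => sSup ((fun t => sInf ((fun s => pairDist t s) '' S N)) '' T))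
      atTop (nhds 0)) :
    ∀ ρ > 0, ∃ N : ℕ,
      sInf ((ebar dbar (S N)) '' Ω) ≥ sInf ((ebar dbar T) '' Ω) - ρ :=
  stmt2_general T Ω hTc hΩne hΩc dbar S hSne hSfin hHaus
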